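/- arXiv:2411.02030 — 6 statements merged into one kernel-verified Lean document; each statement's English description precedes it below -/
import Mathlib

section
/- Let (Ω, F) be a measurable space and V an upper probability on (Ω, F). Then for every sequence (A_n)_{n≥1} of pairwise disjoint sets in F, one has lim_{n→∞} V(A_n) = 0. -/
open MeasureTheory Set Filter Topology ENNReal NNReal

variable {Ω : Type*}

/-- The core of a set function `V` : all countably additive probability measures dominated
by `V` on measurable sets. -/
def UpperCore [MeasurableSpace Ω] (V : Set Ω → ℝ) : Set (Measure Ω) :=
  {P | IsProbabilityMeasure P ∧ ∀ A : Set Ω, MeasurableSet A → (P A).toReal ≤ V A}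

/-- `V` is an upper probability: monotone, normalized, attained as the sup over its core,
and continuous at `∅` along decreasing sequences. -/
def IsUpperProb [MeasurableSpace Ω] (V : Set Ω → ℝ) : Prop :=
  (∀ A B : Set Ω, MeasurableSet A → MeasurableSet B → A ⊆ B → V A ≤ V B) ∧
  V (∅ : Set Ω) = 0 ∧ V (univ : Set Ω) = 1 ∧
  (∀ A : Set Ω, MeasurableSet A →
    V A = sSup ((fun P : Measure Ω => (P A).toReal) '' UpperCore V)) ∧
  (∀ A : ℕ → Set Ω, (∀ n, MeasurableSet (A n)) → (∀ n, A (n + 1) ⊆ A n) →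
    (⋂ n, A n) = ∅ → Tendsto (fun n => V (A n)) atTop (𝓝 0))

/-- A `T`-invariant measurable set. -/
def InvSet [MeasurableSpace Ω] (T : Ω → Ω) (A : Set Ω) : Prop :=
  MeasurableSet A ∧ T ⁻¹' A = A

/-- A `T`-invariant probability measure (an element of `M(T)`). -/
def InvProb [MeasurableSpace Ω] (T : Ω → Ω) (P : Measure Ω) : Prop :=
  IsProbabilityMeasure P ∧ ∀ A : Set Ω, MeasurableSet A → P (T ⁻¹' A) = P A

/-- An ergodic `T`-invariant probability measure (an element of `M^e(T)`). -/
def ErgProb [MeasurableSpace Ω] (T : Ω → Ω) (P : Measure Ω) : Prop :=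
  InvProb T P ∧ ∀ A : Set Ω, InvSet T A → P A = 0 ∨ P A = 1

/-- The set function `V_i(A) = sup {P(A) : P ∈ core(V), P(Ai) = 1}`
(the sup over the empty set being `0`). -/
noncomputable def CompV [MeasurableSpace Ω] (V : Set Ω → ℝ) (Ai : Set Ω) :
    Set Ω → ℝ :=
  fun A => sSup ((fun P : Measure Ω => (P A).toReal) '' {P ∈ UpperCore V | P Ai = 1})

/-- `V` is of finite ergodic components with respect to `T`. -/
def IsFEC [MeasurableSpace Ω] (V : Set Ω → ℝ) (T : Ω → Ω) : Prop :=
  ∃ (n : ℕ) (A : Fin n → Set Ω),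
    (∀ i, InvSet T (A i)) ∧
    (univ : Set Ω) = ⋃ i, A i ∧
    (∀ i j, i ≠ j → Disjoint (A i) (A j)) ∧
    ∀ i, IsUpperProb (CompV V (A i)) ∧
      ∀ B : Set Ω, InvSet T B → CompV V (A i) B = 0 ∨ CompV V (A i) Bᶜ = 0

/-- `Q` is an extreme point of the set `S` of measures. -/
def IsExtremePt [MeasurableSpace Ω] (S : Set (Measure Ω)) (Q : Measure Ω) : Prop :=
  Q ∈ S ∧ ∀ P₁ ∈ S, ∀ P₂ ∈ S, ∀ a : ℝ≥0∞, 0 < a → a < 1 →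
    Q = a • P₁ + (1 - a) • P₂ → P₁ = Q ∧ P₂ = Q

/-! A point lies in at most one member of a disjoint family, so the tails `⋃ k ≥ n, A k` decrease
to `∅`; continuity from above along them forces `V (A n) ≤ V (⋃ k ≥ n, A k) → 0`. -/

open Function

theorem Set.iInter_biUnion_Ici_eq_empty_of_pairwise_disjoint {α : Type*} {A : ℕ → Set α}
    (hdisj : Pairwise (Disjoint on A)) : ⋂ n, ⋃ k ≥ n, A k = ∅ := by
  refine eq_empty_of_forall_notMem fun x hx => ?_
  obtain ⟨k, -, hk⟩ := mem_iUnion₂.1 (mem_iInter.1 hx 0)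
  obtain ⟨j, hj, hj'⟩ := mem_iUnion₂.1 (mem_iInter.1 hx (k + 1))
  exact (hdisj (show k ≠ j by omega)).ne_of_mem hk hj' rfl

theorem tendsto_zero_of_pairwise_disjoint [MeasurableSpace Ω] {V : Set Ω → ℝ}
    (hmono : ∀ A B : Set Ω, MeasurableSet A → MeasurableSet B → A ⊆ B → V A ≤ V B)
    (hempty : V ∅ = 0)
    (hcont : ∀ A : ℕ → Set Ω, (∀ n, MeasurableSet (A n)) → (∀ n, A (n + 1) ⊆ A n) →
      (⋂ n, A n) = ∅ → Tendsto (fun n => V (A n)) atTop (𝓝 0))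
    {A : ℕ → Set Ω} (hA : ∀ n, MeasurableSet (A n)) (hdisj : Pairwise (Disjoint on A)) :
    Tendsto (fun n => V (A n)) atTop (𝓝 0) := by
  set tail : ℕ → Set Ω := fun n => ⋃ k ≥ n, A k
  have htail_meas (n : ℕ) : MeasurableSet (tail n) := .biUnion (to_countable _) fun k _ => hA k
  have htail_anti (n : ℕ) : tail (n + 1) ⊆ tail n :=
    biUnion_subset_biUnion_left fun k (hk : n + 1 ≤ k) => (by omega : n ≤ k)
  have hnonneg (n : ℕ) : 0 ≤ V (A n) :=
    hempty ▸ hmono ∅ (A n) .empty (hA n) (empty_subset _)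
  have hle (n : ℕ) : V (A n) ≤ V (tail n) :=
    hmono (A n) (tail n) (hA n) (htail_meas n) fun _ hx => mem_iUnion₂.2 ⟨n, le_rfl, hx⟩
  exact squeeze_zero hnonneg hle <| hcont tail htail_meas htail_anti
    (iInter_biUnion_Ici_eq_empty_of_pairwise_disjoint hdisj)

/-- For an upper probability `V`, along any sequence of pairwise disjoint
measurable sets, `V (A n) → 0`. -/
theorem stmt_0 [MeasurableSpace Ω] (V : Set Ω → ℝ) (hV : IsUpperProb V)
    (A : ℕ → Set Ω) (hA : ∀ n, MeasurableSet (A n))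
    (hdisj : ∀ m n, m ≠ n → Disjoint (A m) (A n)) :
    Tendsto (fun n => V (A n)) atTop (𝓝 0) := by
  obtain ⟨hmono, hempty, -, -, hcont⟩ := hV
  exact tendsto_zero_of_pairwise_disjoint hmono hempty hcont hA fun m n hmn => hdisj m n hmn
end

section
/- Let (Ω, F, V, T) be an upper probability preserving system. Then the set M^e(T) ∩ core(V) of ergodic T-invariant probability measures lying in the core of V is finite. -/
open MeasureTheory Set Filter Topology ENNReal NNReal
open scoped symmDiff

variable {Ω : Type*}

section AuxProofs

variable [MeasurableSpace Ω] {T : Ω → Ω}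

/-- Iterated preimages of an a.e.-invariant set are a.e. equal to the set. -/
lemma aux_iterate_symmDiff_null (hT : Measurable T) {μ : Measure Ω}
    (hμ : ∀ A : Set Ω, MeasurableSet A → μ (T ⁻¹' A) = μ A)
    {E : Set Ω} (hE : MeasurableSet E) (h0 : μ ((T ⁻¹' E) ∆ E) = 0) :
    ∀ n : ℕ, μ ((T^[n] ⁻¹' E) ∆ E) = 0 := by
  intro n
  induction n with
  | zero => simp
  | succ n ih =>
      have hiter : MeasurableSet (T^[n] ⁻¹' E) := (hT.iterate n) hE
      have hsub : (T^[n+1] ⁻¹' E) ∆ E ⊆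
          ((T ⁻¹' (T^[n] ⁻¹' E)) ∆ (T ⁻¹' E)) ∪ ((T ⁻¹' E) ∆ E) := by
        rw [Function.iterate_succ, Set.preimage_comp]
        exact symmDiff_triangle _ _ _
      refine measure_mono_null hsub (measure_union_null ?_ h0)
      rw [← Set.preimage_symmDiff, hμ _ (hiter.symmDiff hE)]
      exact ih

/-- From an a.e.-invariant set one can construct an exactly invariant set that is
a.e. equal to it. -/
lemma aux_exists_invariant (hT : Measurable T) {μ : Measure Ω}
    (hμ : ∀ A : Set Ω, MeasurableSet A → μ (T ⁻¹' A) = μ A)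
    {E : Set Ω} (hE : MeasurableSet E) (h0 : μ ((T ⁻¹' E) ∆ E) = 0) :
    ∃ S : Set Ω, MeasurableSet S ∧ T ⁻¹' S = S ∧ μ (S ∆ E) = 0 := by
  set U : ℕ → Set Ω := fun N => ⋃ n, T^[N + n] ⁻¹' E with hU
  have hUanti : ∀ N, U (N + 1) ⊆ U N := by
    intro N
    refine Set.iUnion_subset fun n => ?_
    have h : N + 1 + n = N + (n + 1) := by omega
    rw [h]
    exact Set.subset_iUnion (fun m => T^[N + m] ⁻¹' E) (n + 1)
  refine ⟨⋂ N, U N, ?_, ?_, ?_⟩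
  · exact MeasurableSet.iInter fun N => MeasurableSet.iUnion fun n => (hT.iterate _) hE
  · have hpre : ∀ N, T ⁻¹' U N = U (N + 1) := by
      intro N
      simp only [hU, Set.preimage_iUnion]
      refine Set.iUnion_congr fun n => ?_
      have h : N + 1 + n = N + n + 1 := by omega
      rw [h, Function.iterate_succ, Set.preimage_comp]
    rw [Set.preimage_iInter]
    apply Set.Subset.antisymm
    · intro ω hω
      refine Set.mem_iInter.2 fun N => ?_
      have h := Set.mem_iInter.1 hω N
      rw [hpre N] at h
      exact hUanti N h
    · intro ω hω
      refine Set.mem_iInter.2 fun N => ?_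
      rw [hpre N]
      exact Set.mem_iInter.1 hω (N + 1)
  · have hiter := aux_iterate_symmDiff_null hT hμ hE h0
    have hsub : (⋂ N, U N) ∆ E ⊆ ⋃ n, (T^[n] ⁻¹' E) ∆ E := by
      intro ω hω
      rcases Set.mem_symmDiff.1 hω with ⟨hωS, hωE⟩ | ⟨hωE, hωS⟩
      · have h : ω ∈ U 0 := Set.mem_iInter.1 hωS 0
        obtain ⟨n, hn⟩ := Set.mem_iUnion.1 h
        rw [Nat.zero_add] at hn
        exact Set.mem_iUnion.2 ⟨n, Set.mem_symmDiff.2 (Or.inl ⟨hn, hωE⟩)⟩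
      · have h : ∃ N, ω ∉ U N := by
          by_contra hc
          push_neg at hc
          exact hωS (Set.mem_iInter.2 hc)
        obtain ⟨N, hN⟩ := h
        have hNN : ω ∉ T^[N] ⁻¹' E := by
          intro hc
          refine hN (Set.mem_iUnion.2 ⟨0, ?_⟩)
          simpa using hc
        exact Set.mem_iUnion.2 ⟨N, Set.mem_symmDiff.2 (Or.inr ⟨hωE, hNN⟩)⟩
    exact measure_mono_null hsub (measure_iUnion_null hiter)

/-- If one probability measure dominates another on all measurable sets, they are equal. -/
lemma aux_prob_eq_of_le {P Q : Measure Ω} [IsProbabilityMeasure P] [IsProbabilityMeasure Q]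
    (h : ∀ A : Set Ω, MeasurableSet A → P A ≤ Q A) : P = Q := by
  refine Measure.ext fun A hA => le_antisymm (h A hA) ?_
  have h1 : P Aᶜ ≤ Q Aᶜ := h Aᶜ hA.compl
  have hP : P A = 1 - P Aᶜ := by
    rw [prob_compl_eq_one_sub hA, ENNReal.sub_sub_cancel one_ne_top prob_le_one]
  have hQ : Q A = 1 - Q Aᶜ := by
    rw [prob_compl_eq_one_sub hA, ENNReal.sub_sub_cancel one_ne_top prob_le_one]
  rw [hP, hQ]
  exact tsub_le_tsub_left h1 1

/-- Two distinct ergodic invariant probability measures can be separated by a measurable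
set of full measure for one and null for the other. -/
lemma aux_erg_pair (hT : Measurable T) {P Q : Measure Ω}
    (hP : ErgProb T P) (hQ : ErgProb T Q) (hne : P ≠ Q) :
    ∃ S : Set Ω, MeasurableSet S ∧ P S = 1 ∧ Q S = 0 := by
  obtain ⟨⟨hPprob, hPinv⟩, hPerg⟩ := hP
  obtain ⟨⟨hQprob, hQinv⟩, hQerg⟩ := hQ
  haveI := hPprob
  haveI := hQprob
  set μ : Measure Ω := P + Q with hμdef
  have hμapp : ∀ s : Set Ω, μ s = P s + Q s := fun s => by
    rw [hμdef, Measure.add_apply]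
  have hPle : ∀ s : Set Ω, P s ≤ μ s := fun s => by rw [hμapp]; exact le_self_add
  have hQle : ∀ s : Set Ω, Q s ≤ μ s := fun s => by rw [hμapp]; exact le_add_self
  have hμinv : ∀ A : Set Ω, MeasurableSet A → μ (T ⁻¹' A) = μ A := fun A hA => by
    rw [hμapp, hμapp, hPinv A hA, hQinv A hA]
  have hPac : P ≪ μ := Measure.AbsolutelyContinuous.mk fun s hs h0 =>
    le_antisymm (le_trans (hPle s) h0.le) zero_le
  set f : Ω → ℝ≥0∞ := P.rnDeriv μ with hf
  have hfm : Measurable f := Measure.measurable_rnDeriv _ _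
  have hint : ∀ A : Set Ω, MeasurableSet A → ∫⁻ x in A, f x ∂μ = P A := fun A hA =>
    Measure.setLIntegral_rnDeriv' hPac hA
  set E : Set Ω := {x | f x < 2⁻¹} with hE
  have hEm : MeasurableSet E := measurableSet_lt hfm measurable_const
  have hTEm : MeasurableSet (T ⁻¹' E) := hT hEm
  have hS2m : MeasurableSet (E \ T ⁻¹' E) := hEm.diff hTEm
  have hS1m : MeasurableSet (T ⁻¹' E \ E) := hTEm.diff hEm
  have hμ12 : μ (T ⁻¹' E \ E) = μ (E \ T ⁻¹' E) := by
    have h1 : μ (T ⁻¹' E \ E) + μ (T ⁻¹' E ∩ E) = μ (T ⁻¹' E) :=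
      measure_diff_add_inter _ hEm
    have h2 : μ (E \ T ⁻¹' E) + μ (E ∩ T ⁻¹' E) = μ E :=
      measure_diff_add_inter _ hTEm
    rw [Set.inter_comm] at h2
    rw [hμinv E hEm, ← h2] at h1
    exact WithTop.add_right_cancel (measure_ne_top μ _) h1
  have hP12 : P (T ⁻¹' E \ E) = P (E \ T ⁻¹' E) := by
    have h1 : P (T ⁻¹' E \ E) + P (T ⁻¹' E ∩ E) = P (T ⁻¹' E) :=
      measure_diff_add_inter _ hEm
    have h2 : P (E \ T ⁻¹' E) + P (E ∩ T ⁻¹' E) = P E :=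
      measure_diff_add_inter _ hTEm
    rw [Set.inter_comm] at h2
    rw [hPinv E hEm, ← h2] at h1
    exact WithTop.add_right_cancel (measure_ne_top P _) h1
  have hlow : 2⁻¹ * μ (T ⁻¹' E \ E) ≤ P (T ⁻¹' E \ E) := by
    rw [← hint _ hS1m, ← setLIntegral_const]
    exact setLIntegral_mono hfm fun x hx => not_lt.1 hx.2
  have hup : P (E \ T ⁻¹' E) ≤ 2⁻¹ * μ (E \ T ⁻¹' E) := by
    rw [← hint _ hS2m, ← setLIntegral_const]
    exact setLIntegral_mono measurable_const fun x hx => le_of_lt hx.1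
  have hPS2eq : P (E \ T ⁻¹' E) = 2⁻¹ * μ (E \ T ⁻¹' E) := by
    refine le_antisymm hup ?_
    calc 2⁻¹ * μ (E \ T ⁻¹' E) = 2⁻¹ * μ (T ⁻¹' E \ E) := by rw [hμ12]
    _ ≤ P (T ⁻¹' E \ E) := hlow
    _ = P (E \ T ⁻¹' E) := hP12
  have hS2null : μ (E \ T ⁻¹' E) = 0 := by
    have hadd : ∫⁻ x in E \ T ⁻¹' E, f x ∂μ + ∫⁻ x in E \ T ⁻¹' E, (2⁻¹ - f x) ∂μ
        = ∫⁻ x in E \ T ⁻¹' E, (2⁻¹ : ℝ≥0∞) ∂μ := by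
      rw [← lintegral_add_left hfm]
      exact setLIntegral_congr_fun hS2m (fun x hx =>
        add_tsub_cancel_of_le (le_of_lt hx.1))
    rw [hint _ hS2m, setLIntegral_const, ← hPS2eq] at hadd
    have hX0 : ∫⁻ x in E \ T ⁻¹' E, (2⁻¹ - f x) ∂μ = 0 := by
      nth_rewrite 2 [← add_zero (P (E \ T ⁻¹' E))] at hadd
      exact (ENNReal.add_right_inj (measure_ne_top P _)).1 hadd
    have hae : (fun x => (2⁻¹ : ℝ≥0∞) - f x) =ᵐ[μ.restrict (E \ T ⁻¹' E)] 0 :=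
      (lintegral_eq_zero_iff (measurable_const.sub hfm)).1 hX0
    have hmem : ∀ᵐ x ∂μ.restrict (E \ T ⁻¹' E), x ∈ E \ T ⁻¹' E := ae_restrict_mem hS2m
    have hfalse : ∀ᵐ _x ∂μ.restrict (E \ T ⁻¹' E), (False : Prop) := by
      filter_upwards [hae, hmem] with x h1 h2
      exact absurd (tsub_eq_zero_iff_le.1 h1) (not_le.2 h2.1)
    have hz : μ.restrict (E \ T ⁻¹' E) = 0 := by
      rw [← ae_eq_bot, ← Filter.eventually_false_iff_eq_bot]
      exact hfalse
    exact Measure.restrict_eq_zero.1 hz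
  have hsymm : μ ((T ⁻¹' E) ∆ E) = 0 := by
    rw [Set.symmDiff_def]
    refine measure_union_null ?_ hS2null
    rw [hμ12]
    exact hS2null
  obtain ⟨S, hSm, hSinv, hSE⟩ := aux_exists_invariant hT hμinv hEm hsymm
  have hPSE : P S = P E := by
    refine measure_congr (measure_symmDiff_eq_zero_iff.1 ?_)
    exact le_antisymm (le_trans (hPle (S ∆ E)) hSE.le) zero_le
  have hQSE : Q S = Q E := by
    refine measure_congr (measure_symmDiff_eq_zero_iff.1 ?_)
    exact le_antisymm (le_trans (hQle (S ∆ E)) hSE.le) zero_le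
  rcases hPerg S ⟨hSm, hSinv⟩ with hPS | hPS <;> rcases hQerg S ⟨hSm, hSinv⟩ with hQS | hQS
  · -- both zero : `f ≥ 1/2` a.e., hence `Q ≤ P`, hence `P = Q`, contradiction
    exfalso
    have hμE : μ E = 0 := by
      rw [hμapp, ← hPSE, ← hQSE, hPS, hQS, add_zero]
    have hdom : ∀ A : Set Ω, MeasurableSet A → Q A ≤ P A := by
      intro A hA
      have hAE : μ (A \ E) = μ A := measure_diff_null hμE
      have h1 : 2⁻¹ * μ A ≤ P A := by
        rw [← hAE, ← hint _ hA, ← setLIntegral_const]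
        calc ∫⁻ _ in A \ E, (2⁻¹ : ℝ≥0∞) ∂μ
            ≤ ∫⁻ x in A \ E, f x ∂μ :=
              setLIntegral_mono hfm fun x hx => not_lt.1 hx.2
        _ ≤ ∫⁻ x in A, f x ∂μ := lintegral_mono_set Set.diff_subset
      have h2 : P A + Q A ≤ P A + P A := by
        rw [← hμapp, ← two_mul]
        calc μ A = 2 * (2⁻¹ * μ A) := by
              rw [← mul_assoc, ENNReal.mul_inv_cancel two_ne_zero ENNReal.ofNat_ne_top, one_mul]
        _ ≤ 2 * P A := mul_le_mul_right h1 2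
      exact (ENNReal.add_le_add_iff_left (measure_ne_top P A)).1 h2
    exact hne (aux_prob_eq_of_le hdom).symm
  · exact ⟨Sᶜ, hSm.compl, by simp [prob_compl_eq_one_sub hSm, hPS],
      by simp [prob_compl_eq_one_sub hSm, hQS]⟩
  · exact ⟨S, hSm, hPS, hQS⟩
  · -- both one : `f < 1/2` a.e., hence `P ≤ Q`, hence `P = Q`, contradiction
    exfalso
    have hμEc : μ Eᶜ = 0 := by
      have hPc : P Eᶜ = 0 := by
        rw [prob_compl_eq_one_sub hEm, ← hPSE, hPS, tsub_self]
      have hQc : Q Eᶜ = 0 := by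
        rw [prob_compl_eq_one_sub hEm, ← hQSE, hQS, tsub_self]
      rw [hμapp, hPc, hQc, add_zero]
    have hdom : ∀ A : Set Ω, MeasurableSet A → P A ≤ Q A := by
      intro A hA
      have hsub : A ∆ (A \ Eᶜ) ⊆ Eᶜ := by
        intro x hx
        rcases Set.mem_symmDiff.1 hx with ⟨h1, h2⟩ | ⟨h1, h2⟩
        · by_contra hc
          exact h2 ⟨h1, hc⟩
        · exact absurd h1.1 h2
      have hAeq : A =ᵐ[μ] (A \ Eᶜ) :=
        measure_symmDiff_eq_zero_iff.1 (measure_mono_null hsub hμEc)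
      have h1 : P A ≤ 2⁻¹ * μ A := by
        calc P A = ∫⁻ x in A, f x ∂μ := (hint _ hA).symm
        _ = ∫⁻ x in A \ Eᶜ, f x ∂μ := setLIntegral_congr hAeq
        _ ≤ ∫⁻ _ in A \ Eᶜ, (2⁻¹ : ℝ≥0∞) ∂μ :=
            setLIntegral_mono measurable_const fun x hx =>
              le_of_lt (Set.notMem_compl_iff.1 hx.2)
        _ = 2⁻¹ * μ (A \ Eᶜ) := setLIntegral_const _ _
        _ = 2⁻¹ * μ A := by rw [measure_diff_null hμEc]
      have h2 : P A + P A ≤ P A + Q A := by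
        rw [← hμapp, ← two_mul]
        calc 2 * P A ≤ 2 * (2⁻¹ * μ A) := mul_le_mul_right h1 2
        _ = μ A := by
              rw [← mul_assoc, ENNReal.mul_inv_cancel two_ne_zero ENNReal.ofNat_ne_top, one_mul]
      exact (ENNReal.add_le_add_iff_left (measure_ne_top P A)).1 h2
    exact hne (aux_prob_eq_of_le hdom)

end AuxProofs

/-- For an UPPS `(Ω, F, V, T)`, the set of ergodic invariant probability
measures in the core of `V` is finite. -/

theorem stmt_1 [MeasurableSpace Ω] (V : Set Ω → ℝ) (T : Ω → Ω)
    (hV : IsUpperProb V) (hT : Measurable T)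
    (hVinv : ∀ A : Set Ω, MeasurableSet A → V (T ⁻¹' A) = V A) :
    {P : Measure Ω | ErgProb T P ∧ P ∈ UpperCore V}.Finite := by
  by_contra hfin
  have hinf : {P : Measure Ω | ErgProb T P ∧ P ∈ UpperCore V}.Infinite := hfin
  set Pn : ℕ → Measure Ω :=
    fun n => ((Set.Infinite.natEmbedding _ hinf) n : Measure Ω) with hPndef
  have hmem : ∀ n, ErgProb T (Pn n) ∧ Pn n ∈ UpperCore V :=
    fun n => ((Set.Infinite.natEmbedding _ hinf) n).2
  have hinj : Function.Injective Pn := fun a b h =>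
    (Set.Infinite.natEmbedding _ hinf).injective (Subtype.coe_injective h)
  have hprob : ∀ n, IsProbabilityMeasure (Pn n) := fun n => (hmem n).2.1
  have hScex : ∀ i j : ℕ, ∃ S : Set Ω, i ≠ j → MeasurableSet S ∧ Pn i S = 1 ∧ Pn j S = 0 := by
    intro i j
    by_cases h : i = j
    · exact ⟨∅, fun hc => absurd h hc⟩
    · obtain ⟨S, h1, h2, h3⟩ := aux_erg_pair hT (hmem i).1 (hmem j).1 fun he => h (hinj he)
      exact ⟨S, fun _ => ⟨h1, h2, h3⟩⟩
  choose S hS using hScex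
  set C : ℕ → ℕ → Set Ω := fun i j => if i = j then Set.univ else S i j with hC
  have hCm : ∀ i j, MeasurableSet (C i j) := by
    intro i j
    rcases eq_or_ne i j with h | h
    · simp [hC, h]
    · simpa [hC, h] using (hS i j h).1
  have hCfull : ∀ i j, Pn i (C i j) = 1 := by
    intro i j
    haveI := hprob i
    rcases eq_or_ne i j with h | h
    · simp [hC, h]
    · simpa [hC, h] using (hS i j h).2.1
  set B : ℕ → Set Ω := fun i => ⋂ j, C i j with hB
  have hBm : ∀ i, MeasurableSet (B i) := fun i => MeasurableSet.iInter fun j => hCm i j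
  have hBfull : ∀ i, Pn i (B i) = 1 := by
    intro i
    haveI := hprob i
    rw [← prob_compl_eq_zero_iff (hBm i)]
    have hcompl : (B i)ᶜ = ⋃ j, (C i j)ᶜ := by
      simp [hB, Set.compl_iInter]
    rw [hcompl]
    refine measure_iUnion_null fun j => ?_
    rw [prob_compl_eq_zero_iff (hCm i j)]
    exact hCfull i j
  have hBnull : ∀ i j, i ≠ j → Pn j (B i) = 0 := by
    intro i j h
    have hsub : B i ⊆ S i j := by
      have h1 := Set.iInter_subset (fun j => C i j) j
      simpa [hB, hC, h] using h1
    exact measure_mono_null hsub (hS i j h).2.2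
  set W : ℕ → Set Ω := fun n => ⋃ k, B (n + k) with hW
  set G : Set Ω := ⋂ n, W n with hG
  have hWm : ∀ n, MeasurableSet (W n) := fun n => MeasurableSet.iUnion fun k => hBm _
  have hGm : MeasurableSet G := MeasurableSet.iInter hWm
  set A : ℕ → Set Ω := fun n => W n \ G with hA
  have hAm : ∀ n, MeasurableSet (A n) := fun n => (hWm n).diff hGm
  have hAmono : ∀ n, A (n + 1) ⊆ A n := by
    intro n
    refine Set.diff_subset_diff_left ?_
    refine Set.iUnion_subset fun k => ?_
    have h : n + 1 + k = n + (k + 1) := by omega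
    rw [h]
    exact Set.subset_iUnion (fun k => B (n + k)) (k + 1)
  have hAempty : ⋂ n, A n = ∅ := by
    rw [Set.eq_empty_iff_forall_notMem]
    intro x hx
    have hx' : ∀ n, x ∈ W n ∧ x ∉ G := fun n => Set.mem_iInter.1 hx n
    exact (hx' 0).2 (Set.mem_iInter.2 fun n => (hx' n).1)
  have htend := hV.2.2.2.2 A hAm hAmono hAempty
  have hge : ∀ n, (1 : ℝ) ≤ V (A n) := by
    intro n
    haveI := hprob n
    have hG0 : Pn n G = 0 := by
      refine measure_mono_null (Set.iInter_subset W (n + 1)) ?_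
      exact measure_iUnion_null fun k => hBnull (n + 1 + k) n (by omega)
    have h1 : Pn n (A n) = Pn n (W n) := measure_diff_null hG0
    have h2 : Pn n (W n) = 1 := by
      refine le_antisymm prob_le_one ?_
      have hsub : B n ⊆ W n := by
        have h3 := Set.subset_iUnion (fun k => B (n + k)) 0
        simpa [hW] using h3
      calc (1 : ℝ≥0∞) = Pn n (B n) := (hBfull n).symm
      _ ≤ Pn n (W n) := measure_mono hsub
    have hcore := (hmem n).2.2 (A n) (hAm n)
    rw [h1, h2] at hcore
    simpa using hcore
  have hcontr := ge_of_tendsto htend (Filter.Eventually.of_forall hge)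
  linarith
end

section
/- Let (Ω, F, V, T) be an upper probability preserving system. Suppose (P_n)_{n≥1} is a sequence in core(V) ∩ M(T) such that for every A ∈ F the limit ℓ(A) := lim_{n→∞} P_n(A) exists. Then there is a countably additive probability measure P on (Ω, F) with P(A) = ℓ(A) for all A ∈ F, and P ∈ core(V) ∩ M(T). -/
open MeasureTheory Set Filter Topology ENNReal NNReal

variable {Ω : Type*}

/-- (Vitali–Hahn–Saks for the core) If a sequence in `core(V) ∩ M(T)` has
setwise limits on every measurable set, the limit is a probability measure lying in
`core(V) ∩ M(T)`. -/
theorem stmt_14 [MeasurableSpace Ω] (V : Set Ω → ℝ) (T : Ω → Ω)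
    (hV : IsUpperProb V) (hT : Measurable T)
    (hVinv : ∀ A : Set Ω, MeasurableSet A → V (T ⁻¹' A) = V A)
    (Pn : ℕ → Measure Ω)
    (hPn : ∀ m, Pn m ∈ UpperCore V ∧ InvProb T (Pn m))
    (hlim : ∀ A : Set Ω, MeasurableSet A →
      ∃ l : ℝ, Tendsto (fun m => ((Pn m) A).toReal) atTop (𝓝 l)) :
    ∃ P : Measure Ω, IsProbabilityMeasure P ∧ P ∈ UpperCore V ∧ InvProb T P ∧
      ∀ A : Set Ω, MeasurableSet A →
        Tendsto (fun m => ((Pn m) A).toReal) atTop (𝓝 ((P A).toReal)) := by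
  classical
  obtain ⟨hVmono, hV0, hV1, hVsup, hVcont⟩ := hV
  have hprob : ∀ m, IsProbabilityMeasure (Pn m) := fun m => (hPn m).1.1
  have hfin : ∀ m (A : Set Ω), Pn m A ≠ ⊤ := by
    intro m A
    have := hprob m
    exact (measure_lt_top _ _).ne
  set l : Set Ω → ℝ := fun A => if h : MeasurableSet A then (hlim A h).choose else 0 with hl
  have htend : ∀ A : Set Ω, MeasurableSet A →
      Tendsto (fun m => ((Pn m) A).toReal) atTop (𝓝 (l A)) := by
    intro A hA
    simp only [hl, dif_pos hA]
    exact (hlim A hA).choose_spec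
  have hnonneg : ∀ A : Set Ω, MeasurableSet A → 0 ≤ l A := fun A hA =>
    le_of_tendsto_of_tendsto' tendsto_const_nhds (htend A hA) fun m => ENNReal.toReal_nonneg
  have hle : ∀ A : Set Ω, MeasurableSet A → l A ≤ V A := fun A hA =>
    le_of_tendsto (htend A hA) (Eventually.of_forall fun m => (hPn m).1.2 A hA)
  have hempty : l (∅ : Set Ω) = 0 := by
    refine tendsto_nhds_unique (htend ∅ MeasurableSet.empty) ?_
    simp
  have huniv : l (univ : Set Ω) = 1 := by
    refine tendsto_nhds_unique (htend univ MeasurableSet.univ) ?_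
    have : ∀ m, ((Pn m) univ).toReal = 1 := by
      intro m
      have := hprob m
      simp [measure_univ]
    simp_rw [this]
    exact tendsto_const_nhds
  have hadd : ∀ A B : Set Ω, MeasurableSet A → MeasurableSet B → Disjoint A B →
      l (A ∪ B) = l A + l B := by
    intro A B hA hB hAB
    refine tendsto_nhds_unique (htend _ (hA.union hB)) ?_
    have h1 : ∀ m, ((Pn m) (A ∪ B)).toReal = ((Pn m) A).toReal + ((Pn m) B).toReal := by
      intro m
      rw [measure_union hAB hB, ENNReal.toReal_add (hfin m A) (hfin m B)]
    simp_rw [h1]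
    exact (htend A hA).add (htend B hB)
  -- countable additivity
  have hctble : ∀ (f : ℕ → Set Ω), (∀ i, MeasurableSet (f i)) → Pairwise (Function.onFun Disjoint f) →
      HasSum (fun i => l (f i)) (l (⋃ i, f i)) := by
    intro f hf hd
    have hrestm : ∀ k, MeasurableSet (⋃ i, f (i + k)) := fun k =>
      MeasurableSet.iUnion fun i => hf (i + k)
    have hpart : ∀ k, l (⋃ i, f i) =
        (∑ i ∈ Finset.range k, l (f i)) + l (⋃ i, f (i + k)) := by
      intro k
      induction k with
      | zero => simp
      | succ k ih =>
        have hsplit : (⋃ i, f (i + k)) = f k ∪ ⋃ i, f (i + (k + 1)) := by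
          ext x
          simp only [mem_iUnion, mem_union]
          constructor
          · rintro ⟨i, hi⟩
            rcases i with _ | j
            · exact Or.inl (by simpa using hi)
            · refine Or.inr ⟨j, ?_⟩
              have : j + 1 + k = j + (k + 1) := by ring
              rwa [this] at hi
          · rintro (hx | ⟨j, hj⟩)
            · exact ⟨0, by simpa using hx⟩
            · refine ⟨j + 1, ?_⟩
              have : j + 1 + k = j + (k + 1) := by ring
              rwa [this]
        have hdk : Disjoint (f k) (⋃ i, f (i + (k + 1))) := by
          refine disjoint_iUnion_right.2 fun i => hd ?_
          omega
        rw [ih, hsplit, hadd _ _ (hf k) (hrestm (k + 1)) hdk, Finset.sum_range_succ]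
        ring
    have hrest0 : Tendsto (fun k => l (⋃ i, f (i + k))) atTop (𝓝 0) := by
      have hVrest : Tendsto (fun k => V (⋃ i, f (i + k))) atTop (𝓝 0) := by
        refine hVcont _ hrestm ?_ ?_
        · intro k x hx
          simp only [mem_iUnion] at hx ⊢
          obtain ⟨i, hi⟩ := hx
          refine ⟨i + 1, ?_⟩
          have : i + 1 + k = i + (k + 1) := by ring
          rwa [this]
        · ext x
          simp only [mem_iInter, mem_iUnion, mem_empty_iff_false, iff_false, not_forall]
          by_contra hcon
          push_neg at hcon
          obtain ⟨i0, hi0⟩ := hcon 0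
          obtain ⟨j, hj⟩ := hcon (i0 + 1)
          have hne : i0 ≠ j + (i0 + 1) := by omega
          exact (hd hne).le_bot ⟨by simpa using hi0, hj⟩
      refine squeeze_zero (fun k => hnonneg _ (hrestm k)) (fun k => hle _ (hrestm k)) hVrest
    have hps : Tendsto (fun k => ∑ i ∈ Finset.range k, l (f i)) atTop (𝓝 (l (⋃ i, f i))) := by
      have heq : ∀ k, (∑ i ∈ Finset.range k, l (f i)) = l (⋃ i, f i) - l (⋃ i, f (i + k)) := by
        intro k
        rw [hpart k]; ring
      simp_rw [heq]
      simpa using tendsto_const_nhds.sub hrest0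
    exact (hasSum_iff_tendsto_nat_of_nonneg (fun i => hnonneg _ (hf i)) _).2 hps
  set P : Measure Ω := Measure.ofMeasurable (fun s _ => ENNReal.ofReal (l s))
    (by simp [hempty])
    (by
      intro f hf hd
      have hs := hctble f hf hd
      show ENNReal.ofReal (l (⋃ i, f i)) = ∑' i, ENNReal.ofReal (l (f i))
      rw [← hs.tsum_eq, ENNReal.ofReal_tsum_of_nonneg (fun i => hnonneg _ (hf i)) hs.summable])
    with hP
  have hPapp : ∀ A : Set Ω, MeasurableSet A → P A = ENNReal.ofReal (l A) := fun A hA =>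
    Measure.ofMeasurable_apply A hA
  have hPreal : ∀ A : Set Ω, MeasurableSet A → (P A).toReal = l A := by
    intro A hA
    rw [hPapp A hA, ENNReal.toReal_ofReal (hnonneg A hA)]
  have hPprob : IsProbabilityMeasure P := by
    constructor
    rw [hPapp univ MeasurableSet.univ, huniv, ENNReal.ofReal_one]
  refine ⟨P, hPprob, ⟨hPprob, fun A hA => ?_⟩, ⟨hPprob, fun A hA => ?_⟩, fun A hA => ?_⟩
  · rw [hPreal A hA]; exact hle A hA
  · have hTA : l (T ⁻¹' A) = l A := by
      refine tendsto_nhds_unique (htend _ (hT hA)) ?_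
      have : ∀ m, ((Pn m) (T ⁻¹' A)).toReal = ((Pn m) A).toReal := by
        intro m
        rw [(hPn m).2.2 A hA]
      simp_rw [this]
      exact htend A hA
    rw [hPapp _ (hT hA), hPapp A hA, hTA]
  · rw [hPreal A hA]
    exact htend A hA
end

section
/- Let (Ω, F, P) be a probability space and T : Ω → Ω a measurable transformation. Then the set {P(A) : A ∈ I} is finite if and only if there exists a finite irreducible invariant set partition, i.e. a finite measurable partition {A_1, …, A_n} of Ω such that for each i: P(A_i) > 0, A_i ∈ I, and there is no B ∈ I with B ⊆ A_i and 0 < P(B) < P(A_i). -/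
open MeasureTheory Set Filter Topology ENNReal NNReal

variable {Ω : Type*}

section AuxStmt15
variable [MeasurableSpace Ω]

lemma invSet_inter' {T : Ω → Ω} {A B : Set Ω}
    (hA : InvSet T A) (hB : InvSet T B) : InvSet T (A ∩ B) :=
  ⟨hA.1.inter hB.1, by rw [Set.preimage_inter, hA.2, hB.2]⟩

lemma invSet_diff' {T : Ω → Ω} {A B : Set Ω}
    (hA : InvSet T A) (hB : InvSet T B) : InvSet T (A \ B) :=
  ⟨hA.1.diff hB.1, by rw [Set.preimage_diff, hA.2, hB.2]⟩

lemma aux_partition_stmt15 (P : Measure Ω) [IsProbabilityMeasure P]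
    (T : Ω → Ω)
    (hFin : {x : ℝ≥0∞ | ∃ A : Set Ω, InvSet T A ∧ P A = x}.Finite) :
    ∀ n : ℕ, ∀ C : Set Ω, InvSet T C → 0 < P C →
      {x : ℝ≥0∞ | 0 < x ∧ ∃ B : Set Ω, InvSet T B ∧ B ⊆ C ∧ P B = x}.ncard ≤ n →
      ∃ l : List (Set Ω), l.Pairwise Disjoint ∧ (⋃ A ∈ l, A) = C ∧
        ∀ A ∈ l, InvSet T A ∧ 0 < P A ∧
          ∀ B : Set Ω, InvSet T B → B ⊆ A → ¬(0 < P B ∧ P B < P A) := by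
  have hSubFin : ∀ C : Set Ω,
      {x : ℝ≥0∞ | 0 < x ∧ ∃ B : Set Ω, InvSet T B ∧ B ⊆ C ∧ P B = x}.Finite := by
    intro C
    refine hFin.subset ?_
    rintro x ⟨-, B, hB, -, hPB⟩
    exact ⟨B, hB, hPB⟩
  intro n
  induction n with
  | zero =>
    intro C hC hPC hcard
    exfalso
    have hmem : P C ∈ {x : ℝ≥0∞ | 0 < x ∧ ∃ B : Set Ω, InvSet T B ∧ B ⊆ C ∧ P B = x} :=
      ⟨hPC, C, hC, subset_rfl, rfl⟩
    have := (Set.ncard_pos (hSubFin C)).2 ⟨_, hmem⟩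
    omega
  | succ n ih =>
    intro C hC hPC hcard
    obtain ⟨a, haS, hamin⟩ := Set.exists_min_image
      {x : ℝ≥0∞ | 0 < x ∧ ∃ B : Set Ω, InvSet T B ∧ B ⊆ C ∧ P B = x} id
      (hSubFin C) ⟨P C, hPC, C, hC, subset_rfl, rfl⟩
    obtain ⟨hapos, A, hA, hAC, hPA⟩ := haS
    have hsum : P A + P (C \ A) = P C := by
      have h := measure_inter_add_diff (μ := P) C hA.1
      rwa [Set.inter_eq_self_of_subset_right hAC] at h
    by_cases hrest : P (C \ A) = 0
    · refine ⟨[C], by simp, by simp, ?_⟩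
      intro A' hA'
      simp only [List.mem_singleton] at hA'
      rw [hA']
      refine ⟨hC, hPC, ?_⟩
      rintro B hB hBC ⟨hB0, hBlt⟩
      have hPAC : P A = P C := by rw [← hsum, hrest, add_zero]
      have h1 : a ≤ P B := hamin _ ⟨hB0, B, hB, hBC, rfl⟩
      have h2 : P C ≤ P B := by rw [← hPAC, hPA]; exact h1
      exact absurd hBlt (not_lt.2 h2)
    · have hCA : InvSet T (C \ A) := invSet_diff' hC hA
      have hPCA : 0 < P (C \ A) := pos_iff_ne_zero.mpr hrest
      have hPApos : 0 < P A := by rw [hPA]; exact hapos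
      have hlt : P (C \ A) < P C := by
        rw [← hsum, add_comm]
        exact ENNReal.lt_add_right (measure_ne_top P _) hPApos.ne'
      have hssub : {x : ℝ≥0∞ | 0 < x ∧ ∃ B : Set Ω, InvSet T B ∧ B ⊆ C \ A ∧ P B = x} ⊂
          {x : ℝ≥0∞ | 0 < x ∧ ∃ B : Set Ω, InvSet T B ∧ B ⊆ C ∧ P B = x} := by
        constructor
        · rintro x ⟨hx, B, hB, hBCA, hPB⟩
          exact ⟨hx, B, hB, hBCA.trans Set.diff_subset, hPB⟩
        · intro hsub
          have : P C ∈ {x : ℝ≥0∞ | 0 < x ∧ ∃ B : Set Ω, InvSet T B ∧ B ⊆ C \ A ∧ P B = x} :=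
            hsub ⟨hPC, C, hC, subset_rfl, rfl⟩
          obtain ⟨-, B, hB, hBCA, hPB⟩ := this
          have : P B ≤ P (C \ A) := measure_mono hBCA
          rw [hPB] at this
          exact absurd this (not_le.2 hlt)
      have hcard' : {x : ℝ≥0∞ | 0 < x ∧ ∃ B : Set Ω, InvSet T B ∧ B ⊆ C \ A ∧ P B = x}.ncard ≤ n := by
        have := Set.ncard_lt_ncard hssub (hSubFin C)
        omega
      obtain ⟨l, hpw, hun, hirr⟩ := ih (C \ A) hCA hPCA hcard'
      have hsubl : ∀ A' ∈ l, A' ⊆ C \ A := by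
        intro A' hA'
        rw [← hun]
        intro x hx
        exact Set.mem_biUnion hA' hx
      refine ⟨A :: l, ?_, ?_, ?_⟩
      · refine List.Pairwise.cons ?_ hpw
        intro A' hA'
        exact Set.disjoint_of_subset_right (hsubl A' hA') disjoint_sdiff_right
      · have : (⋃ B ∈ A :: l, B) = A ∪ ⋃ B ∈ l, B := by
          simp [Set.iUnion_or, Set.iUnion_union_distrib]
        rw [this, hun, Set.union_diff_cancel hAC]
      · intro A' hA'
        rcases List.mem_cons.1 hA' with h | h
        · rw [h]
          refine ⟨hA, hPApos, ?_⟩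
          rintro B hB hBA ⟨hB0, hBlt⟩
          have h1 : a ≤ P B := hamin _ ⟨hB0, B, hB, hBA.trans hAC, rfl⟩
          have h2 : P A ≤ P B := by rw [hPA]; exact h1
          exact absurd hBlt (not_lt.2 h2)
        · exact hirr A' h

end AuxStmt15

/-- `{P(A) : A ∈ I}` is finite iff there exists a finite irreducible invariant
set partition. -/
theorem stmt_15 [MeasurableSpace Ω] (P : Measure Ω) [IsProbabilityMeasure P]
    (T : Ω → Ω) (hT : Measurable T) :
    {x : ℝ≥0∞ | ∃ A : Set Ω, InvSet T A ∧ P A = x}.Finite ↔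
      ∃ (n : ℕ) (A : Fin n → Set Ω),
        (univ : Set Ω) = ⋃ i, A i ∧
        (∀ i j, i ≠ j → Disjoint (A i) (A j)) ∧
        ∀ i, InvSet T (A i) ∧ 0 < P (A i) ∧
          ∀ B : Set Ω, InvSet T B → B ⊆ A i → ¬(0 < P B ∧ P B < P (A i)) := by
  classical
  constructor
  · intro hFin
    have hCuniv : InvSet T (univ : Set Ω) := ⟨MeasurableSet.univ, Set.preimage_univ⟩
    have hPuniv : 0 < P (univ : Set Ω) := by simp
    obtain ⟨l, hpw, hun, hirr⟩ := aux_partition_stmt15 P T hFin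
      {x : ℝ≥0∞ | 0 < x ∧ ∃ B : Set Ω, InvSet T B ∧ B ⊆ univ ∧ P B = x}.ncard
      univ hCuniv hPuniv le_rfl
    refine ⟨l.length, fun i => l.get i, ?_, ?_, ?_⟩
    · rw [← hun]
      ext x
      simp only [Set.mem_iUnion, exists_prop]
      constructor
      · rintro ⟨B, hB, hx⟩
        obtain ⟨i, rfl⟩ := List.mem_iff_get.1 hB
        exact ⟨i, hx⟩
      · rintro ⟨i, hx⟩
        exact ⟨l.get i, List.get_mem l i, hx⟩
    · intro i j hij
      rcases lt_or_gt_of_ne hij with h | h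
      · exact List.pairwise_iff_get.1 hpw i j h
      · exact (List.pairwise_iff_get.1 hpw j i h).symm
    · intro i
      exact hirr (l.get i) (List.get_mem l i)
  · rintro ⟨n, A, hcover, hdisj, hprop⟩
    have key : ∀ B : Set Ω, InvSet T B →
        P B = ∑ i ∈ Finset.univ.filter (fun i => P (B ∩ A i) ≠ 0), P (A i) := by
      intro B hB
      have hmeas : ∀ i, MeasurableSet (B ∩ A i) := fun i => hB.1.inter (hprop i).1.1
      have hdisj' : Pairwise (Function.onFun Disjoint fun i => B ∩ A i) := by
        intro i j hij
        exact Set.disjoint_of_subset Set.inter_subset_right Set.inter_subset_right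
          (hdisj i j hij)
      have hBeq : B = ⋃ i, B ∩ A i := by
        rw [← Set.inter_iUnion, ← hcover, Set.inter_univ]
      have h1 : P B = ∑ i, P (B ∩ A i) := by
        conv_lhs => rw [hBeq]
        rw [measure_iUnion hdisj' hmeas, tsum_fintype]
      have h2 : ∀ i, P (B ∩ A i) = 0 ∨ P (B ∩ A i) = P (A i) := by
        intro i
        obtain ⟨hAi, hAipos, hAiirr⟩ := hprop i
        have hBA : InvSet T (B ∩ A i) := invSet_inter' hB hAi
        have := hAiirr (B ∩ A i) hBA Set.inter_subset_right
        rcases eq_or_ne (P (B ∩ A i)) 0 with h | h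
        · exact Or.inl h
        · right
          refine le_antisymm (measure_mono Set.inter_subset_right) ?_
          by_contra hlt
          exact this ⟨pos_iff_ne_zero.mpr h, not_le.1 hlt⟩
      rw [h1, ← Finset.sum_filter_ne_zero]
      refine Finset.sum_congr rfl ?_
      intro i hi
      simp only [Finset.mem_filter] at hi
      rcases h2 i with h | h
      · exact absurd h hi.2
      · exact h
    have hsub : {x : ℝ≥0∞ | ∃ A' : Set Ω, InvSet T A' ∧ P A' = x} ⊆
        Set.range (fun s : Finset (Fin n) => ∑ i ∈ s, P (A i)) := by
      rintro x ⟨B, hB, rfl⟩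
      exact ⟨Finset.univ.filter (fun i => P (B ∩ A i) ≠ 0), (key B hB).symm⟩
    exact (Set.finite_range _).subset hsub
end

section
/- Let (Ω, F, P) be a probability space and T : Ω → Ω a measurable bijection with measurable inverse, and suppose {A_1, …, A_n} is a finite irreducible invariant set partition for (Ω, F, P, T). Fix j ∈ {1, …, n} and let P_j(A) := P(A ∩ A_j)/P(A_j) for A ∈ F. Suppose Q_j is a probability measure on (Ω, F) such that Q_j(A) = lim_{N→∞} (1/N) Σ_{i=0}^{N−1} P_j(T^{−i}A) for every A ∈ F. Then Q_j is T-invariant, Q_j(A_j) = 1, and Q_j is ergodic, i.e. Q_j(A) ∈ {0, 1} for every A ∈ I. -/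
open MeasureTheory Set Filter Topology ENNReal NNReal

variable {Ω : Type*}

lemma iter_preimage_eq {T : Ω → Ω} {B : Set Ω} (h : T ⁻¹' B = B) :
    ∀ i, T^[i] ⁻¹' B = B := by
  intro i
  induction i with
  | zero => simp
  | succ k ih => rw [Function.iterate_succ', Set.preimage_comp, h, ih]

lemma cesaro_shift (a : ℕ → ℝ) (hb : ∀ i, |a i| ≤ 1) (L L' : ℝ)
    (h : Tendsto (fun N : ℕ => (N : ℝ)⁻¹ * ∑ i ∈ Finset.range N, a i) atTop (𝓝 L))
    (h' : Tendsto (fun N : ℕ => (N : ℝ)⁻¹ * ∑ i ∈ Finset.range N, a (i + 1)) atTop (𝓝 L')) :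
    L = L' := by
  have htail : Tendsto (fun N : ℕ => (N : ℝ)⁻¹ * (a N - a 0)) atTop (𝓝 0) := by
    have hle : ∀ N : ℕ, ‖(N : ℝ)⁻¹ * (a N - a 0)‖ ≤ 2 * (N : ℝ)⁻¹ := by
      intro N
      have h1 : |a N - a 0| ≤ 2 := by
        calc |a N - a 0| ≤ |a N| + |a 0| := abs_sub _ _
          _ ≤ 1 + 1 := add_le_add (hb N) (hb 0)
          _ = 2 := by norm_num
      calc ‖(N : ℝ)⁻¹ * (a N - a 0)‖ = (N : ℝ)⁻¹ * |a N - a 0| := by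
            rw [norm_mul, Real.norm_eq_abs, Real.norm_eq_abs,
              abs_of_nonneg (by positivity : (0:ℝ) ≤ (N : ℝ)⁻¹)]
        _ ≤ (N : ℝ)⁻¹ * 2 := mul_le_mul_of_nonneg_left h1 (by positivity)
        _ = 2 * (N : ℝ)⁻¹ := mul_comm _ _
    have h2 : Tendsto (fun N : ℕ => 2 * (N : ℝ)⁻¹) atTop (𝓝 0) := by
      have := _root_.tendsto_inv_atTop_nhds_zero_nat (𝕜 := ℝ)
      simpa using this.const_mul (2 : ℝ)
    exact squeeze_zero_norm hle h2
  have heq : ∀ N : ℕ, (N : ℝ)⁻¹ * ∑ i ∈ Finset.range N, a (i + 1)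
      = (N : ℝ)⁻¹ * ∑ i ∈ Finset.range N, a i + (N : ℝ)⁻¹ * (a N - a 0) := by
    intro N
    have : ∑ i ∈ Finset.range N, a (i + 1) = (∑ i ∈ Finset.range N, a i) + (a N - a 0) := by
      have hs := Finset.sum_range_succ' a N
      have hs2 := Finset.sum_range_succ a N
      rw [hs2] at hs
      linarith
    rw [this, mul_add]
  have h'' : Tendsto (fun N : ℕ => (N : ℝ)⁻¹ * ∑ i ∈ Finset.range N, a (i + 1)) atTop
      (𝓝 (L + 0)) := by
    apply (h.add htail).congr
    intro N
    exact (heq N).symm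
  rw [add_zero] at h''
  exact tendsto_nhds_unique h'' h'

/-- Given a finite irreducible invariant set partition and the Cesàro limit
`Q_j` of the conditioned measures `P_j ∘ T^{-i}`, the measure `Q_j` is invariant, gives
full measure to `A_j`, and is ergodic. -/
theorem stmt_16 [MeasurableSpace Ω] (P : Measure Ω) [IsProbabilityMeasure P]
    (T T' : Ω → Ω) (hT : Measurable T) (hT' : Measurable T')
    (hleft : Function.LeftInverse T' T) (hright : Function.RightInverse T' T)
    (n : ℕ) (A : Fin n → Set Ω)
    (hcover : (univ : Set Ω) = ⋃ i, A i)
    (hdisj : ∀ i j, i ≠ j → Disjoint (A i) (A j))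
    (hinv : ∀ i, InvSet T (A i))
    (hpos : ∀ i, 0 < P (A i))
    (hirr : ∀ i, ∀ B : Set Ω, InvSet T B → B ⊆ A i → ¬(0 < P B ∧ P B < P (A i)))
    (j : Fin n) (Q : Measure Ω) [IsProbabilityMeasure Q]
    (hQ : ∀ B : Set Ω, MeasurableSet B →
      Tendsto (fun N : ℕ => (N : ℝ)⁻¹ * ∑ i ∈ Finset.range N,
          (P (T^[i] ⁻¹' B ∩ A j)).toReal / (P (A j)).toReal) atTop
        (𝓝 ((Q B).toReal))) :
    (∀ B : Set Ω, MeasurableSet B → Q (T ⁻¹' B) = Q B) ∧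
      Q (A j) = 1 ∧
      ∀ B : Set Ω, InvSet T B → Q B = 0 ∨ Q B = 1 := by
  have hAjtop : P (A j) ≠ ⊤ := measure_ne_top P _
  have hAj0 : (P (A j)).toReal ≠ 0 :=
    (ENNReal.toReal_pos (hpos j).ne' hAjtop).ne'
  have hbound : ∀ (B : Set Ω) (i : ℕ),
      |(P (T^[i] ⁻¹' B ∩ A j)).toReal / (P (A j)).toReal| ≤ 1 := by
    intro B i
    rw [abs_of_nonneg (by positivity)]
    apply div_le_one_of_le₀
    · exact ENNReal.toReal_mono hAjtop (measure_mono inter_subset_right)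
    · positivity
  -- a key: the value of Q on invariant sets
  have key : ∀ (B : Set Ω), MeasurableSet B → T ⁻¹' B = B →
      (Q B).toReal = (P (B ∩ A j)).toReal / (P (A j)).toReal := by
    intro B hB hBinv
    have h1 := hQ B hB
    have h2 : Tendsto (fun N : ℕ => (N : ℝ)⁻¹ * ∑ i ∈ Finset.range N,
        (P (T^[i] ⁻¹' B ∩ A j)).toReal / (P (A j)).toReal) atTop
        (𝓝 ((P (B ∩ A j)).toReal / (P (A j)).toReal)) := by
      apply Tendsto.congr' _ (tendsto_const_nhds)
      filter_upwards [eventually_ge_atTop 1] with N hN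
      have hN0 : (N : ℝ) ≠ 0 := Nat.cast_ne_zero.mpr (by omega)
      simp only [iter_preimage_eq hBinv, Finset.sum_const, Finset.card_range,
        nsmul_eq_mul]
      rw [← mul_assoc, inv_mul_cancel₀ hN0, one_mul]
    exact tendsto_nhds_unique h1 h2
  refine ⟨?_, ?_, ?_⟩
  · -- invariance
    intro B hB
    have h1 := hQ B hB
    have h1' := hQ (T ⁻¹' B) (hT hB)
    simp only [← Set.preimage_comp, ← Function.iterate_succ'] at h1'
    have := cesaro_shift (fun i => (P (T^[i] ⁻¹' B ∩ A j)).toReal / (P (A j)).toReal)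
      (hbound B) _ _ h1 h1'
    exact ((ENNReal.toReal_eq_toReal_iff' (measure_ne_top Q _) (measure_ne_top Q _)).mp
      this.symm)
  · -- Q (A j) = 1
    have h := key (A j) (hinv j).1 (hinv j).2
    rw [inter_self, div_self hAj0] at h
    rwa [ENNReal.toReal_eq_one_iff] at h
  · -- ergodicity
    intro B hB
    have hBAj : InvSet T (B ∩ A j) := by
      refine ⟨hB.1.inter (hinv j).1, ?_⟩
      rw [Set.preimage_inter, hB.2, (hinv j).2]
    have h := key B hB.1 hB.2
    have hirrj := hirr j (B ∩ A j) hBAj inter_subset_right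
    rcases eq_or_lt_of_le (zero_le : (0 : ℝ≥0∞) ≤ P (B ∩ A j)) with h0 | h0
    · left
      rw [← h0] at h
      simp only [ENNReal.toReal_zero, zero_div] at h
      rw [← ENNReal.toReal_eq_toReal_iff' (measure_ne_top Q _) (by simp)]
      simpa using h
    · right
      have hle : P (B ∩ A j) ≤ P (A j) := measure_mono inter_subset_right
      have heq : P (B ∩ A j) = P (A j) := by
        by_contra hne
        exact hirrj ⟨h0, lt_of_le_of_ne hle hne⟩
      rw [heq, div_self hAj0] at h
      rwa [ENNReal.toReal_eq_one_iff] at h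
end

section
/- Let (Ω, F, P) be a probability space and T : Ω → Ω a measurable bijection with measurable inverse, and suppose {A_1, …, A_n} is a finite irreducible invariant set partition for (Ω, F, P, T). Fix j ∈ {1, …, n}, let P_j(A) := P(A ∩ A_j)/P(A_j) for A ∈ F, and suppose the limit lim_{N→∞} (1/N) Σ_{i=0}^{N−1} P_j(T^{−i}A) exists for every A ∈ F. Define V_j(A) := sup_{M,N ≥ 0} (1/(M+N+1)) Σ_{i=−M}^{N} P_j(T^{−i}A) for A ∈ F, where for i ∈ ℤ, T^{−i}A denotes the preimage of A under the i-th iterate of T (negative iterates taken via the inverse of T). Then V_j is ergodic with respect to T: for every A ∈ I, either V_j(A) = 0 or V_j(Ω ∖ A) = 0. -/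
open MeasureTheory Set Filter Topology ENNReal NNReal

variable {Ω : Type*}

/-- The upper probability `V_j(B) = sup_{M,N ≥ 0} (1/(M+N+1)) Σ_{i=-M}^{N} P_j(T^{-i}B)`,
where `P_j(·) = P(· ∩ Aj)/P(Aj)`, `T'` is the inverse of `T`, and for `i < 0` the preimage
under `T^i` is the preimage under `T'^{|i|}`. -/
noncomputable def VComp [MeasurableSpace Ω] (P : Measure Ω) (T T' : Ω → Ω)
    (Aj : Set Ω) (B : Set Ω) : ℝ :=
  sSup {x : ℝ | ∃ M N : ℕ, x = (((M : ℝ) + N + 1))⁻¹ *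
    ((∑ k ∈ Finset.range M, (P (T'^[k + 1] ⁻¹' B ∩ Aj)).toReal / (P Aj).toReal) +
      ∑ i ∈ Finset.range (N + 1), (P (T^[i] ⁻¹' B ∩ Aj)).toReal / (P Aj).toReal)}

lemma iterate_preimage_inv {T : Ω → Ω} {B : Set Ω} (h : T ⁻¹' B = B) :
    ∀ k, T^[k] ⁻¹' B = B := by
  intro k
  induction k with
  | zero => simp
  | succ k ih => rw [Function.iterate_succ, Set.preimage_comp, ih, h]

lemma VComp_of_inv [MeasurableSpace Ω] (P : Measure Ω) (T T' : Ω → Ω) (Aj B : Set Ω)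
    (h : ∀ k, T^[k] ⁻¹' B = B) (h' : ∀ k, T'^[k] ⁻¹' B = B) :
    VComp P T T' Aj B = (P (B ∩ Aj)).toReal / (P Aj).toReal := by
  set c := (P (B ∩ Aj)).toReal / (P Aj).toReal with hc
  have hset : {x : ℝ | ∃ M N : ℕ, x = (((M : ℝ) + N + 1))⁻¹ *
      ((∑ k ∈ Finset.range M, (P (T'^[k + 1] ⁻¹' B ∩ Aj)).toReal / (P Aj).toReal) +
        ∑ i ∈ Finset.range (N + 1), (P (T^[i] ⁻¹' B ∩ Aj)).toReal / (P Aj).toReal)} = {c} := by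
    ext x
    simp only [Set.mem_setOf_eq, Set.mem_singleton_iff, h, h', Finset.sum_const,
      Finset.card_range, nsmul_eq_mul]
    constructor
    · rintro ⟨M, N, rfl⟩
      have hMN : ((M : ℝ) + N + 1) ≠ 0 := by positivity
      push_cast
      rw [inv_mul_eq_iff_eq_mul₀ hMN]
      ring
    · intro hx
      exact ⟨0, 0, by simp [hx, hc]⟩
  rw [VComp, hset, csSup_singleton]

/-- Under the finite irreducible invariant set partition assumption and the
existence of the Cesàro limits, the upper probability `V_j` is ergodic with respect to `T`. -/
theorem stmt_17 [MeasurableSpace Ω] (P : Measure Ω) [IsProbabilityMeasure P]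
    (T T' : Ω → Ω) (hT : Measurable T) (hT' : Measurable T')
    (hleft : Function.LeftInverse T' T) (hright : Function.RightInverse T' T)
    (n : ℕ) (A : Fin n → Set Ω)
    (hcover : (univ : Set Ω) = ⋃ i, A i)
    (hdisj : ∀ i j, i ≠ j → Disjoint (A i) (A j))
    (hinv : ∀ i, InvSet T (A i))
    (hpos : ∀ i, 0 < P (A i))
    (hirr : ∀ i, ∀ B : Set Ω, InvSet T B → B ⊆ A i → ¬(0 < P B ∧ P B < P (A i)))
    (j : Fin n)
    (hlim : ∀ B : Set Ω, MeasurableSet B →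
      ∃ l : ℝ, Tendsto (fun N : ℕ => (N : ℝ)⁻¹ * ∑ i ∈ Finset.range N,
          (P (T^[i] ⁻¹' B ∩ A j)).toReal / (P (A j)).toReal) atTop (𝓝 l)) :
    ∀ B : Set Ω, InvSet T B →
      VComp P T T' (A j) B = 0 ∨ VComp P T T' (A j) Bᶜ = 0 := by
  intro B hB
  obtain ⟨hBm, hBinv⟩ := hB
  have hB' : T' ⁻¹' B = B := by
    ext x
    simp only [Set.mem_preimage]
    constructor
    · intro hx
      have h2 : T (T' x) ∈ B := by
        have : T' x ∈ T ⁻¹' B := by rw [hBinv]; exact hx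
        exact this
      rwa [hright x] at h2
    · intro hx
      rw [← hBinv]
      show T (T' x) ∈ B
      rwa [hright x]
  have hBc : T ⁻¹' Bᶜ = Bᶜ := by rw [Set.preimage_compl, hBinv]
  have hBc' : T' ⁻¹' Bᶜ = Bᶜ := by rw [Set.preimage_compl, hB']
  obtain ⟨hAjm, hAjinv⟩ := hinv j
  have hinterinv : InvSet T (B ∩ A j) :=
    ⟨hBm.inter hAjm, by rw [Set.preimage_inter, hBinv, hAjinv]⟩
  have hsub : B ∩ A j ⊆ A j := Set.inter_subset_right
  have hle : P (B ∩ A j) ≤ P (A j) := measure_mono hsub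
  have hcase := hirr j (B ∩ A j) hinterinv hsub
  have hPAj : P (A j) ≠ ⊤ := measure_ne_top P _
  rcases eq_or_lt_of_le (zero_le : (0 : ℝ≥0∞) ≤ P (B ∩ A j)) with h0 | h0
  · left
    rw [VComp_of_inv P T T' (A j) B (iterate_preimage_inv hBinv)
      (iterate_preimage_inv hB')]
    rw [← h0]
    simp
  · have heq : P (B ∩ A j) = P (A j) := by
      rcases eq_or_lt_of_le hle with h | h
      · exact h
      · exact absurd ⟨h0, h⟩ hcase
    right
    rw [VComp_of_inv P T T' (A j) Bᶜ (iterate_preimage_inv hBc)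
      (iterate_preimage_inv hBc')]
    have hsplit : P (B ∩ A j) + P (Bᶜ ∩ A j) = P (A j) := by
      rw [Set.inter_comm B, Set.inter_comm Bᶜ, ← Set.diff_eq]
      exact measure_inter_add_diff (A j) hBm
    have hz : P (Bᶜ ∩ A j) = 0 := by
      rw [heq] at hsplit
      nth_rewrite 2 [← add_zero (P (A j))] at hsplit
      exact WithTop.add_left_cancel hPAj hsplit
    rw [hz]
    simp
end
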